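/- Let B be a skew brace of nilpotent type (i.e., (B,+) is nilpotent, say of class k) which is left nilpotent of class ℓ (i.e., B^{ℓ+1} = {0}, where B^1 = B and B^{n+1} = ⟨B ∗ B^n⟩_+). Then B is strongly left nilpotent: there is a chain {0} = I_0 < ⋯ < I_{kℓ} = B of strong left ideals with B ∗ I_{i+1} ⊆ I_i for all i, whose consecutive quotients are additively centralized by B. Explicitly, one may take I_{iℓ−j+1} = Z^+_i(B) ∩ (B^j + Z^+_{i−1}(B)) for 1 ≤ i ≤ k, 1 ≤ j ≤ ℓ+1, where Z^+_i(B) is the upper central series of (B,+). -/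
import Mathlib


/-- A skew (left) brace: a type with an additive group structure `(B,+)` and a
multiplicative group structure `(B,∘)` (written `*`), satisfying the skew left
distributive law `a ∘ (b + c) = a ∘ b − a + a ∘ c`.  Addition is not assumed
commutative. -/
class SkewBrace (B : Type*) extends AddGroup B, Group B where
  skew_mul_add : ∀ a b c : B, a * (b + c) = a * b + -a + a * c

namespace SkewBrace

variable {B : Type*} [SkewBrace B]

/-- `lam a x = −a + a ∘ x`, the lambda map of a skew brace. -/
def lam (a x : B) : B := -a + a * x

/-- The star operation `a ∗ b = λ_a(b) − b = −a + a ∘ b − b`. -/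
def sstar (a b : B) : B := -a + a * b + -b

/-- A sub-skew-brace: a subset closed under both group operations and inverses. -/
def IsSubSkewBrace (C : Set B) : Prop :=
  (0 : B) ∈ C ∧ (∀ a ∈ C, ∀ b ∈ C, a + b ∈ C) ∧ (∀ a ∈ C, -a ∈ C) ∧
    (∀ a ∈ C, ∀ b ∈ C, a * b ∈ C) ∧ (∀ a ∈ C, a⁻¹ ∈ C)

/-- A subgroup of the additive group `(B,+)`, as a subset. -/
def IsAddSubgroup (S : Set B) : Prop :=
  (0 : B) ∈ S ∧ (∀ a ∈ S, ∀ b ∈ S, a + b ∈ S) ∧ (∀ a ∈ S, -a ∈ S)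

/-- A subgroup of the multiplicative group `(B,∘)`, as a subset. -/
def IsMulSubgroup (S : Set B) : Prop :=
  (1 : B) ∈ S ∧ (∀ a ∈ S, ∀ b ∈ S, a * b ∈ S) ∧ (∀ a ∈ S, a⁻¹ ∈ S)

/-- A strong left ideal: an additively normal, `λ`-invariant additive subgroup. -/
def IsStrongLeftIdeal (J : Set B) : Prop :=
  IsAddSubgroup J ∧ (∀ b : B, ∀ j ∈ J, b + j + -b ∈ J) ∧ (∀ b : B, ∀ j ∈ J, lam b j ∈ J)

/-- An ideal: a sub-skew-brace which is additively normal, `λ`-invariant and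
multiplicatively normal. -/
def IsIdeal (I : Set B) : Prop :=
  IsSubSkewBrace I ∧ (∀ b : B, ∀ a ∈ I, b + a + -b ∈ I) ∧
    (∀ b : B, ∀ a ∈ I, lam b a ∈ I) ∧ (∀ b : B, ∀ a ∈ I, b * a * b⁻¹ ∈ I)

/-- Multiplication of the design group `G(B) = (B,+) ⋊_λ (B,∘)`. -/
def gmul (p q : B × B) : B × B := (p.1 + lam p.2 q.1, p.2 * q.2)

/-- Inversion in the design group `G(B)`. -/
def ginv (p : B × B) : B × B := (-(lam p.2⁻¹ p.1), p.2⁻¹)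

/-- For a subset `I ⊆ B`, the subset `G(I) = I × I` of the design group. -/
def designSet (I : Set B) : Set (B × B) := {p | p.1 ∈ I ∧ p.2 ∈ I}

/-- The upper central series of the additive group `(B,+)`, as sets. -/
def zAdd (B : Type*) [SkewBrace B] : ℕ → Set B
  | 0 => {0}
  | n + 1 => {a : B | ∀ b : B, a + b + -a + -b ∈ zAdd B n}

/-- The left series `B^1 = B`, `B^{n+1} = ⟨B ∗ B^n⟩_+` (here `bSeries B n = B^n`
for `n ≥ 1`). -/
def bSeries (B : Type*) [SkewBrace B] : ℕ → Set B
  | 0 => Set.univ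
  | 1 => Set.univ
  | n + 2 =>
    (AddSubgroup.closure
      {x : B | ∃ a : B, ∃ b ∈ bSeries B (n + 1), x = sstar a b} : Set B)

/-! ### Auxiliary lemmas -/

lemma lam_add (a x y : B) : lam a (x + y) = lam a x + lam a y := by
  simp only [lam, skew_mul_add a x y]
  rw [add_assoc, add_assoc]

lemma lam_zero (a : B) : lam a 0 = 0 := by
  have h := lam_add a 0 0
  rw [add_zero] at h
  exact (left_eq_add.mp h)

lemma lam_neg (a x : B) : lam a (-x) = -(lam a x) := by
  have h := lam_add a x (-x)
  rw [add_neg_cancel, lam_zero] at h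
  exact (neg_eq_of_add_eq_zero_right h.symm).symm

lemma lam_lam (a b x : B) : lam a (lam b x) = lam (a * b) x := by
  have h2 : -a + a * (-b) = -(-a + a * b) := lam_neg a b
  simp only [lam]
  rw [skew_mul_add, ← mul_assoc] at *
  rw [← add_assoc, ← add_assoc, h2, neg_add_rev, neg_neg]
  simp [add_assoc]

lemma lam_one (x : B) : lam 1 x = x := by
  have h : lam 1 (lam 1 x) = lam 1 x := by rw [lam_lam, one_mul]
  have hinj : ∀ y z : B, lam 1 y = lam 1 z → y = z := by
    intro y z hyz
    simpa [lam] using hyz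
  exact hinj _ _ h

lemma lam_lam_inv (b x : B) : lam b (lam b⁻¹ x) = x := by
  rw [lam_lam, mul_inv_cancel, lam_one]

lemma lam_inv_lam (b x : B) : lam b⁻¹ (lam b x) = x := by
  rw [lam_lam, inv_mul_cancel, lam_one]

lemma sstar_eq (a b : B) : sstar a b = lam a b + -b := by
  simp [sstar, lam]

lemma lam_sstar (c a b : B) : lam c (sstar a b) = sstar (c * a) b + -(sstar c b) := by
  rw [sstar_eq, sstar_eq, sstar_eq, lam_add, lam_neg, lam_lam, neg_add_rev, neg_neg]
  rw [add_assoc, neg_add_cancel_left]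

/-! ### Lemmas on the additive upper central series -/

lemma zAdd_zero_mem : ∀ n, (0 : B) ∈ zAdd B n
  | 0 => rfl
  | n + 1 => by
    intro b
    simpa using zAdd_zero_mem n

lemma zAdd_mono : ∀ n, zAdd B n ⊆ zAdd B (n + 1)
  | 0 => by
    intro a ha
    simp only [zAdd, Set.mem_singleton_iff] at ha
    subst ha
    intro b
    have h0 : (0 : B) ∈ zAdd B 0 := rfl
    simpa using h0
  | n + 1 => by
    intro a ha b
    exact zAdd_mono n (ha b)

lemma zAdd_le {n m : ℕ} (h : n ≤ m) : zAdd B n ⊆ zAdd B m := by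
  induction h with
  | refl => exact fun _ h => h
  | step _ ih => exact fun x hx => zAdd_mono _ (ih hx)

lemma zAdd_closure (n : ℕ) :
    (∀ a ∈ zAdd B n, ∀ b ∈ zAdd B n, a + b ∈ zAdd B n) ∧
    (∀ a ∈ zAdd B n, -a ∈ zAdd B n) ∧
    (∀ b : B, ∀ a ∈ zAdd B n, b + a + -b ∈ zAdd B n) := by
  induction n with
  | zero =>
    refine ⟨?_, ?_, ?_⟩ <;> simp [zAdd]
  | succ n ih =>
    obtain ⟨ihadd, ihneg, ihconj⟩ := ih
    have hadd : ∀ a ∈ zAdd B (n+1), ∀ b ∈ zAdd B (n+1), a + b ∈ zAdd B (n+1) := by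
      intro a ha b hb c
      have key : a + b + c + -(a + b) + -c
          = (a + (b + c + -b + -c) + -a) + (a + c + -a + -c) := by
        simp [neg_add_rev, add_assoc]
      rw [key]
      exact ihadd _ (ihconj a _ (hb c)) _ (ha c)
    have hneg : ∀ a ∈ zAdd B (n+1), -a ∈ zAdd B (n+1) := by
      intro a ha c
      have key : -a + c + -(-a) + -c = -a + (-(a + c + -a + -c)) + -(-a) := by
        simp [neg_add_rev, add_assoc]
      rw [key]
      exact ihconj (-a) _ (ihneg _ (ha c))
    refine ⟨hadd, hneg, ?_⟩
    intro b a ha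
    have h1 : -a + b + -(-a) + -b ∈ zAdd B (n+1) := zAdd_mono n (hneg a ha b)
    have key : b + a + -b = a + (-a + b + -(-a) + -b) := by
      simp [add_assoc]
    rw [key]
    exact hadd a ha _ h1

lemma zAdd_add_mem {n : ℕ} {a b : B} (ha : a ∈ zAdd B n) (hb : b ∈ zAdd B n) :
    a + b ∈ zAdd B n := (zAdd_closure n).1 a ha b hb

lemma zAdd_neg_mem {n : ℕ} {a : B} (ha : a ∈ zAdd B n) : -a ∈ zAdd B n :=
  (zAdd_closure n).2.1 a ha

lemma zAdd_conj_mem {n : ℕ} (b : B) {a : B} (ha : a ∈ zAdd B n) :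
    b + a + -b ∈ zAdd B n := (zAdd_closure n).2.2 b a ha

lemma zAdd_comm_mem {n : ℕ} {a : B} (ha : a ∈ zAdd B n) (b : B) :
    a + b + -a + -b ∈ zAdd B (n - 1) := by
  cases n with
  | zero =>
    simp only [zAdd, Set.mem_singleton_iff] at ha
    subst ha
    have h0 : (0 : B) ∈ zAdd B 0 := rfl
    simpa using h0
  | succ n => exact ha b

lemma zAdd_comm_mem' {n : ℕ} {a : B} (ha : a ∈ zAdd B n) (b : B) :
    b + a + -b + -a ∈ zAdd B (n - 1) := by
  have h := zAdd_neg_mem (zAdd_comm_mem ha b)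
  have key : -(a + b + -a + -b) = b + a + -b + -a := by simp [neg_add_rev, add_assoc]
  rwa [key] at h

lemma zAdd_lam_mem : ∀ n, ∀ b : B, ∀ a ∈ zAdd B n, lam b a ∈ zAdd B n
  | 0 => by
    intro b a ha
    simp only [zAdd, Set.mem_singleton_iff] at ha ⊢
    subst ha
    exact lam_zero b
  | n + 1 => by
    intro b a ha c
    have h1 : lam b (a + lam b⁻¹ c + -a + -(lam b⁻¹ c)) ∈ zAdd B n :=
      zAdd_lam_mem n b _ (ha (lam b⁻¹ c))
    have key : lam b (a + lam b⁻¹ c + -a + -(lam b⁻¹ c))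
        = lam b a + c + -(lam b a) + -c := by
      rw [lam_add, lam_add, lam_add, lam_neg, lam_neg, lam_lam_inv]
    rwa [key] at h1

/-! ### Lemmas on the left series -/

lemma bSeries_zero_mem : ∀ n, (0 : B) ∈ bSeries B n
  | 0 => trivial
  | 1 => trivial
  | n + 2 => by
    show (0 : B) ∈ (AddSubgroup.closure
      {x : B | ∃ a : B, ∃ b ∈ bSeries B (n + 1), x = sstar a b} : Set B)
    exact AddSubgroup.zero_mem _

lemma bSeries_add_mem : ∀ n, ∀ a ∈ bSeries B n, ∀ b ∈ bSeries B n, a + b ∈ bSeries B n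
  | 0 => by intro _ _ _ _; trivial
  | 1 => by intro _ _ _ _; trivial
  | n + 2 => by
    intro a ha b hb
    exact AddSubgroup.add_mem _ ha hb

lemma bSeries_neg_mem : ∀ n, ∀ a ∈ bSeries B n, -a ∈ bSeries B n
  | 0 => by intro _ _; trivial
  | 1 => by intro _ _; trivial
  | n + 2 => by
    intro a ha
    exact AddSubgroup.neg_mem _ ha

lemma bSeries_succ_subset : ∀ n, bSeries B (n + 1) ⊆ bSeries B n
  | 0 => fun _ _ => trivial
  | 1 => fun _ _ => trivial
  | n + 2 => by
    have ih := bSeries_succ_subset (n + 1)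
    refine SetLike.coe_subset_coe.mpr (AddSubgroup.closure_mono ?_)
    rintro x ⟨a, b, hb, rfl⟩
    exact ⟨a, b, ih hb, rfl⟩

lemma bSeries_sstar_mem {n : ℕ} (hn : 1 ≤ n) (a : B) {b : B} (hb : b ∈ bSeries B n) :
    sstar a b ∈ bSeries B (n + 1) := by
  cases n with
  | zero => omega
  | succ m =>
    show sstar a b ∈ (AddSubgroup.closure
      {x : B | ∃ a : B, ∃ b ∈ bSeries B (m + 1), x = sstar a b} : Set B)
    exact AddSubgroup.subset_closure ⟨a, b, hb, rfl⟩

lemma bSeries_lam_mem : ∀ n, ∀ c : B, ∀ x ∈ bSeries B n, lam c x ∈ bSeries B n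
  | 0 => by intro _ _ _; trivial
  | 1 => by intro _ _ _; trivial
  | n + 2 => by
    intro c x hx
    show lam c x ∈ AddSubgroup.closure
      {x : B | ∃ a : B, ∃ b ∈ bSeries B (n + 1), x = sstar a b}
    refine AddSubgroup.closure_induction ?_ ?_ ?_ ?_ hx
    · rintro y ⟨a, b, hb, rfl⟩
      rw [lam_sstar]
      exact AddSubgroup.add_mem _ (AddSubgroup.subset_closure ⟨c * a, b, hb, rfl⟩)
        (AddSubgroup.neg_mem _ (AddSubgroup.subset_closure ⟨c, b, hb, rfl⟩))
    · rw [lam_zero]; exact AddSubgroup.zero_mem _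
    · intro y z _ _ hy hz
      rw [lam_add]; exact AddSubgroup.add_mem _ hy hz
    · intro y _ hy
      rw [lam_neg]; exact AddSubgroup.neg_mem _ hy

/-! ### The building blocks of the chain -/

/-- `Jset B i j = Z_i ∩ (B^j + Z_{i-1})`. -/
def Jset (B : Type*) [SkewBrace B] (i j : ℕ) : Set B :=
  zAdd B i ∩ {x : B | ∃ u ∈ bSeries B j, ∃ v ∈ zAdd B (i - 1), x = u + v}

lemma Jset_subset_zAdd (i j : ℕ) : Jset B i j ⊆ zAdd B i := Set.inter_subset_left

lemma zAdd_pred_subset_Jset (i j : ℕ) : zAdd B (i - 1) ⊆ Jset B i j := by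
  intro v hv
  exact ⟨zAdd_le (Nat.sub_le i 1) hv, 0, bSeries_zero_mem j, v, hv, (zero_add v).symm⟩

lemma Jset_zero_mem (i j : ℕ) : (0 : B) ∈ Jset B i j :=
  zAdd_pred_subset_Jset i j (zAdd_zero_mem _)

lemma Jset_one (i : ℕ) : Jset B i 1 = zAdd B i := by
  apply Set.Subset.antisymm (Jset_subset_zAdd i 1)
  intro x hx
  exact ⟨hx, x, Set.mem_univ x, 0, zAdd_zero_mem _, (add_zero x).symm⟩

lemma Jset_top {l : ℕ} (hleft : bSeries B (l + 1) = {0}) (i : ℕ) :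
    Jset B i (l + 1) = zAdd B (i - 1) := by
  apply Set.Subset.antisymm
  · rintro x ⟨hz, u, hu, v, hv, rfl⟩
    rw [hleft] at hu
    simp only [Set.mem_singleton_iff] at hu
    subst hu
    rwa [zero_add]
  · exact zAdd_pred_subset_Jset i (l + 1)

lemma Jset_antitone (i j : ℕ) : Jset B i (j + 1) ⊆ Jset B i j := by
  rintro x ⟨hz, u, hu, v, hv, rfl⟩
  exact ⟨hz, u, bSeries_succ_subset j hu, v, hv, rfl⟩

lemma Jset_add_mem {i j : ℕ} {x y : B} (hx : x ∈ Jset B i j) (hy : y ∈ Jset B i j) :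
    x + y ∈ Jset B i j := by
  obtain ⟨hxz, u, hu, v, hv, rfl⟩ := hx
  obtain ⟨hyz, u', hu', v', hv', rfl⟩ := hy
  refine ⟨zAdd_add_mem hxz hyz, u + u', bSeries_add_mem _ u hu u' hu',
    (-u' + v + -(-u')) + v', zAdd_add_mem (zAdd_conj_mem (-u') hv) hv', ?_⟩
  simp [add_assoc]

lemma Jset_neg_mem {i j : ℕ} {x : B} (hx : x ∈ Jset B i j) : -x ∈ Jset B i j := by
  obtain ⟨hxz, u, hu, v, hv, rfl⟩ := hx
  refine ⟨zAdd_neg_mem hxz, -u, bSeries_neg_mem _ u hu,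
    u + -v + -u, zAdd_conj_mem u (zAdd_neg_mem hv), ?_⟩
  simp [neg_add_rev, add_assoc]

lemma Jset_conj_mem {i j : ℕ} (b : B) {x : B} (hx : x ∈ Jset B i j) :
    b + x + -b ∈ Jset B i j := by
  have hxz : x ∈ zAdd B i := hx.1
  have hc : -x + b + -(-x) + -b ∈ zAdd B (i - 1) := zAdd_comm_mem (zAdd_neg_mem hxz) b
  have key : b + x + -b = x + (-x + b + -(-x) + -b) := by simp [add_assoc]
  rw [key]
  exact Jset_add_mem hx (zAdd_pred_subset_Jset i j hc)

lemma Jset_lam_mem {i j : ℕ} (b : B) {x : B} (hx : x ∈ Jset B i j) :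
    lam b x ∈ Jset B i j := by
  obtain ⟨hxz, u, hu, v, hv, rfl⟩ := hx
  exact ⟨zAdd_lam_mem _ b _ hxz, lam b u, bSeries_lam_mem _ b u hu,
    lam b v, zAdd_lam_mem _ b v hv, lam_add b u v⟩

lemma Jset_isStrongLeftIdeal (i j : ℕ) : IsStrongLeftIdeal (Jset B i j) :=
  ⟨⟨Jset_zero_mem i j, fun _ ha _ hb => Jset_add_mem ha hb, fun _ ha => Jset_neg_mem ha⟩,
    fun b _ hx => Jset_conj_mem b hx, fun b _ hx => Jset_lam_mem b hx⟩

lemma Jset_sstar_mem {i j : ℕ} (hj : 1 ≤ j) (b : B) {a : B} (ha : a ∈ Jset B i j) :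
    sstar b a ∈ Jset B i (j + 1) := by
  obtain ⟨haz, u, hu, v, hv, rfl⟩ := ha
  have h1 : sstar b v ∈ zAdd B (i - 1) := by
    rw [sstar_eq]
    exact zAdd_add_mem (zAdd_lam_mem _ b _ hv) (zAdd_neg_mem hv)
  refine ⟨?_, sstar b u, bSeries_sstar_mem hj b hu,
    u + sstar b v + -u, zAdd_conj_mem u h1, ?_⟩
  · rw [sstar_eq]
    exact zAdd_add_mem (zAdd_lam_mem _ b _ haz) (zAdd_neg_mem haz)
  · simp [sstar_eq, lam_add, neg_add_rev, add_assoc]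

/-- The chain of strong left ideals. -/
def chainI (B : Type*) [SkewBrace B] (l m : ℕ) : Set B :=
  Jset B (m / l + 1) ((m / l + 1) * l + 1 - m)

lemma chainI_eq {l : ℕ} (hl : 0 < l) (q r : ℕ) (hr : r < l) :
    chainI B l (l * q + r) = Jset B (q + 1) (l + 1 - r) := by
  have h1 : (l * q + r) / l = q := by
    rw [Nat.mul_add_div hl, Nat.div_eq_of_lt hr, add_zero]
  show Jset B ((l * q + r) / l + 1) (((l * q + r) / l + 1) * l + 1 - (l * q + r)) = _
  have h2 : (q + 1) * l + 1 - (l * q + r) = l + 1 - r := by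
    rw [add_mul, one_mul, mul_comm q l]; omega
  rw [h1, h2]

/-- The trivial case: if `B` is a trivial brace, everything holds with the
constant chain `Set.univ`. -/
lemma trivial_chain (htriv : ∀ x : B, x = 0) (k l : ℕ) :
    ∃ I : ℕ → Set B, I 0 = {0} ∧ I (k * l) = Set.univ ∧
      (∀ i : ℕ, I i ⊆ I (i + 1)) ∧
      (∀ i : ℕ, IsStrongLeftIdeal (I i)) ∧
      (∀ i : ℕ, ∀ b : B, ∀ a ∈ I (i + 1), sstar b a ∈ I i) ∧
      (∀ i : ℕ, ∀ b : B, ∀ a ∈ I (i + 1), b + a + -b + -a ∈ I i) ∧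
      (∀ i j : ℕ, 1 ≤ i → i ≤ k → 1 ≤ j → j ≤ l + 1 →
        I (i * l + 1 - j) =
          zAdd B i ∩ {x : B | ∃ u ∈ bSeries B j, ∃ v ∈ zAdd B (i - 1), x = u + v}) := by
  refine ⟨fun _ => Set.univ, ?_, rfl, fun _ => subset_rfl,
    fun _ => ⟨⟨trivial, fun _ _ _ _ => trivial, fun _ _ => trivial⟩,
      fun _ _ _ => trivial, fun _ _ _ => trivial⟩,
    fun _ _ _ _ => trivial, fun _ _ _ _ => trivial, ?_⟩
  · exact Set.ext fun x => ⟨fun _ => htriv x, fun _ => trivial⟩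
  · intro i j _ _ _ _
    apply Set.Subset.antisymm
    · intro x _
      rw [htriv x]
      exact ⟨zAdd_zero_mem i, 0, bSeries_zero_mem j, 0, zAdd_zero_mem _, (add_zero 0).symm⟩
    · intro x _
      trivial

/-- A skew brace of nilpotent type (additive class `k`) which is left nilpotent
of class `ℓ` is strongly left nilpotent: the chain
`I_{iℓ−j+1} = Z^+_i(B) ∩ (B^j + Z^+_{i−1}(B))` (for `1 ≤ i ≤ k`, `1 ≤ j ≤ ℓ+1`)
is a chain `{0} = I_0 ⊆ ⋯ ⊆ I_{kℓ} = B` of strong left ideals with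
`B ∗ I_{i+1} ⊆ I_i`, whose consecutive quotients are additively centralized by
`B`. -/
theorem strongly_left_nilpotent_of_nilpotent_type (k l : ℕ)
    (htype : zAdd B k = Set.univ) (hleft : bSeries B (l + 1) = {0}) :
    ∃ I : ℕ → Set B, I 0 = {0} ∧ I (k * l) = Set.univ ∧
      (∀ i : ℕ, I i ⊆ I (i + 1)) ∧
      (∀ i : ℕ, IsStrongLeftIdeal (I i)) ∧
      (∀ i : ℕ, ∀ b : B, ∀ a ∈ I (i + 1), sstar b a ∈ I i) ∧
      (∀ i : ℕ, ∀ b : B, ∀ a ∈ I (i + 1), b + a + -b + -a ∈ I i) ∧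
      (∀ i j : ℕ, 1 ≤ i → i ≤ k → 1 ≤ j → j ≤ l + 1 →
        I (i * l + 1 - j) =
          zAdd B i ∩ {x : B | ∃ u ∈ bSeries B j, ∃ v ∈ zAdd B (i - 1), x = u + v}) := by
  rcases Nat.eq_zero_or_pos l with rfl | hl
  · -- `l = 0` : then `B^1 = {0}`, so `B` is trivial.
    have htriv : ∀ x : B, x = 0 := by
      intro x
      have hx : x ∈ bSeries B (0 + 1) := Set.mem_univ x
      rw [hleft] at hx
      exact hx
    exact trivial_chain htriv k 0
  rcases Nat.eq_zero_or_pos k with rfl | hk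
  · -- `k = 0` : then `Z_0 = {0} = B`, so `B` is trivial.
    have htriv : ∀ x : B, x = 0 := by
      intro x
      have hx : x ∈ zAdd B 0 := htype ▸ Set.mem_univ x
      exact hx
    exact trivial_chain htriv 0 l
  -- Main case.
  have hdecomp : ∀ m : ℕ, ∃ q r, r < l ∧ m = l * q + r := fun m =>
    ⟨m / l, m % l, Nat.mod_lt m hl, (Nat.div_add_mod m l).symm⟩
  refine ⟨chainI B l, ?_, ?_, ?_, ?_, ?_, ?_, ?_⟩
  · -- `I 0 = {0}`
    have h := chainI_eq (B := B) hl 0 0 hl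
    simp only [Nat.mul_zero, Nat.add_zero, Nat.zero_add, Nat.sub_zero] at h
    rw [h, Jset_top hleft]
    rfl
  · -- `I (k*l) = univ`
    have h := chainI_eq (B := B) hl k 0 hl
    simp only [Nat.add_zero, Nat.sub_zero] at h
    rw [mul_comm k l, h, Jset_top hleft]
    exact htype
  · -- monotone
    intro m
    obtain ⟨q, r, hr, rfl⟩ := hdecomp m
    rw [chainI_eq hl q r hr]
    rcases Nat.lt_or_ge (r + 1) l with hlt | hge
    · have h1 : chainI B l (l * q + r + 1) = Jset B (q + 1) (l + 1 - (r + 1)) := by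
        rw [add_assoc]; exact chainI_eq hl q (r + 1) hlt
      rw [h1]
      have he : l + 1 - r = (l + 1 - (r + 1)) + 1 := by omega
      rw [he]
      exact Jset_antitone _ _
    · have h1 : chainI B l (l * q + r + 1) = Jset B (q + 1 + 1) (l + 1 - 0) := by
        have hidx : l * q + r + 1 = l * (q + 1) + 0 := by rw [Nat.mul_succ]; omega
        rw [hidx]; exact chainI_eq hl (q + 1) 0 hl
      rw [h1, Nat.sub_zero, Jset_top hleft]
      exact Jset_subset_zAdd _ _
  · -- strong left ideals
    intro m
    show IsStrongLeftIdeal (Jset B (m / l + 1) ((m / l + 1) * l + 1 - m))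
    exact Jset_isStrongLeftIdeal _ _
  · -- star condition
    intro m b a ha
    obtain ⟨q, r, hr, rfl⟩ := hdecomp m
    rw [chainI_eq hl q r hr]
    rcases Nat.lt_or_ge (r + 1) l with hlt | hge
    · have h1 : chainI B l (l * q + r + 1) = Jset B (q + 1) (l + 1 - (r + 1)) := by
        rw [add_assoc]; exact chainI_eq hl q (r + 1) hlt
      rw [h1] at ha
      have h2 := Jset_sstar_mem (show 1 ≤ l + 1 - (r + 1) by omega) b ha
      have he : l + 1 - (r + 1) + 1 = l + 1 - r := by omega
      rwa [he] at h2
    · have h1 : chainI B l (l * q + r + 1) = Jset B (q + 1 + 1) (l + 1 - 0) := by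
        have hidx : l * q + r + 1 = l * (q + 1) + 0 := by rw [Nat.mul_succ]; omega
        rw [hidx]; exact chainI_eq hl (q + 1) 0 hl
      rw [h1, Nat.sub_zero, Jset_top hleft] at ha
      have ha' : a ∈ Jset B (q + 1) 1 := by rw [Jset_one]; exact ha
      have h2 := Jset_sstar_mem le_rfl b ha'
      have he : (1 : ℕ) + 1 = l + 1 - r := by omega
      rwa [he] at h2
  · -- commutator condition
    intro m b a ha
    obtain ⟨q, r, hr, rfl⟩ := hdecomp m
    rw [chainI_eq hl q r hr]
    rcases Nat.lt_or_ge (r + 1) l with hlt | hge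
    · have h1 : chainI B l (l * q + r + 1) = Jset B (q + 1) (l + 1 - (r + 1)) := by
        rw [add_assoc]; exact chainI_eq hl q (r + 1) hlt
      rw [h1] at ha
      have haz : a ∈ zAdd B (q + 1) := ha.1
      exact zAdd_pred_subset_Jset (q + 1) _ (zAdd_comm_mem' haz b)
    · have h1 : chainI B l (l * q + r + 1) = Jset B (q + 1 + 1) (l + 1 - 0) := by
        have hidx : l * q + r + 1 = l * (q + 1) + 0 := by rw [Nat.mul_succ]; omega
        rw [hidx]; exact chainI_eq hl (q + 1) 0 hl
      rw [h1, Nat.sub_zero, Jset_top hleft] at ha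
      have ha' : a ∈ zAdd B (q + 1) := ha
      exact zAdd_pred_subset_Jset (q + 1) _ (zAdd_comm_mem' ha' b)
  · -- the explicit description
    intro i j h1i _ h1j hjl
    obtain ⟨i', rfl⟩ : ∃ i', i = i' + 1 := ⟨i - 1, by omega⟩
    show chainI B l ((i' + 1) * l + 1 - j) = Jset B (i' + 1) j
    rcases eq_or_lt_of_le h1j with hj1 | hj2
    · -- `j = 1`
      have hidx : (i' + 1) * l + 1 - 1 = l * (i' + 1) + 0 := by
        rw [mul_comm]; omega
      rw [← hj1, hidx, chainI_eq hl (i' + 1) 0 hl, Nat.sub_zero, Jset_top hleft, Jset_one]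
      rfl
    · rcases eq_or_lt_of_le hjl with hjl1 | hjlt
      · -- `j = l + 1`
        subst hjl1
        have hidx : (i' + 1) * l + 1 - (l + 1) = l * i' + 0 := by
          rw [add_mul, one_mul, mul_comm i' l]; omega
        rw [hidx, chainI_eq hl i' 0 hl, Nat.sub_zero]
      · -- `2 ≤ j ≤ l`
        have hidx : (i' + 1) * l + 1 - j = l * i' + (l + 1 - j) := by
          rw [add_mul, one_mul, mul_comm i' l]; omega
        have hrr : l + 1 - j < l := by omega
        have h2 : l + 1 - (l + 1 - j) = j := by omega
        rw [hidx, chainI_eq hl i' (l + 1 - j) hrr, h2]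


end SkewBrace
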